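/- Let R be a discrete valuation ring with maximal ideal 𝔪 generated by a uniformizer ϖ and finite residue field of odd cardinality q. Let I = {g ∈ GL₂(R) : g₂₁ ∈ 𝔪} be the Iwahori subgroup, let T = {!![a, b; ϖ·b, a] : a ∈ Rˣ, b ∈ R} (the unit group of the ramified quadratic order, a subgroup of I), and for j ≥ 1 let V^j = {g ∈ GL₂(R) : g₁₁ − 1 ∈ 𝔪^{⌈j/2⌉}, g₂₂ − 1 ∈ 𝔪^{⌈j/2⌉}, g₁₂ ∈ 𝔪^{⌊j/2⌋}, g₂₁ ∈ 𝔪^{⌊j/2⌋+1}}. Then for every i ≥ 1, the set T·V^i is a subgroup of I (since V^i is normal in I), and its index in I equals (q − 1)·q^{i−1}. -/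

import Mathlib

open IsLocalRing Matrix Pointwise

variable (R : Type*) [CommRing R] [IsLocalRing R]

/-- The Iwahori subgroup of `GL₂(R)`: invertible matrices whose lower-left entry lies in
the maximal ideal. -/
def iwahori : Subgroup (GL (Fin 2) R) where
  carrier := {g : GL (Fin 2) R | (g : Matrix (Fin 2) (Fin 2) R) 1 0 ∈ maximalIdeal R}
  one_mem' := by simp
  mul_mem' := by
    intro a b ha hb
    show (↑(a * b) : Matrix (Fin 2) (Fin 2) R) 1 0 ∈ maximalIdeal R
    rw [Matrix.GeneralLinearGroup.coe_mul, Matrix.mul_apply, Fin.sum_univ_two]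
    exact add_mem (Ideal.mul_mem_right _ _ ha) (Ideal.mul_mem_left _ _ hb)
  inv_mem' := by
    intro a ha
    show (↑(a⁻¹) : Matrix (Fin 2) (Fin 2) R) 1 0 ∈ maximalIdeal R
    rw [Matrix.GeneralLinearGroup.coe_inv, Matrix.inv_def, Matrix.smul_apply,
      Matrix.adjugate_fin_two]
    simp only [Matrix.cons_val', Matrix.cons_val_zero, Matrix.cons_val_one, Matrix.head_cons,
      Matrix.empty_val', Matrix.cons_val_fin_one, Matrix.head_fin_const, smul_eq_mul]
    exact Ideal.mul_mem_left _ _ (neg_mem ha)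

/-- The set `Vʲ = 1 + (rad 𝒥)ʲ` in `GL₂(R)`, where `𝒥` is the Iwahori order:
matrices `g` with `g₁₁ - 1, g₂₂ - 1 ∈ 𝔪^⌈j/2⌉`, `g₁₂ ∈ 𝔪^⌊j/2⌋` and `g₂₁ ∈ 𝔪^(⌊j/2⌋+1)`. -/
def iwahoriFiltration (R : Type*) [CommRing R] [IsLocalRing R] (j : ℕ) :
    Set (GL (Fin 2) R) :=
  {g : GL (Fin 2) R |
    (g : Matrix (Fin 2) (Fin 2) R) 0 0 - 1 ∈ maximalIdeal R ^ ((j + 1) / 2) ∧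
    (g : Matrix (Fin 2) (Fin 2) R) 1 1 - 1 ∈ maximalIdeal R ^ ((j + 1) / 2) ∧
    (g : Matrix (Fin 2) (Fin 2) R) 0 1 ∈ maximalIdeal R ^ (j / 2) ∧
    (g : Matrix (Fin 2) (Fin 2) R) 1 0 ∈ maximalIdeal R ^ (j / 2 + 1)}

/-- The unit group of the ramified quadratic order inside the Iwahori subgroup:
invertible matrices of the shape `!![a, b; ϖ·b, a]` with `a` a unit. -/
def ramifiedTorus (R : Type*) [CommRing R] (ϖ : R) : Set (GL (Fin 2) R) :=
  {g : GL (Fin 2) R |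
    ∃ (a : Rˣ) (b : R), (g : Matrix (Fin 2) (Fin 2) R) = !![(a : R), b; ϖ * b, (a : R)]}


/-!
`Vʲ` is the congruence subgroup `1 + (rad 𝒥)ʲ`, and `(rad 𝒥)ʲ` is a two-sided ideal of the
Iwahori order `𝒥`, so `Vʲ` is normalized by `I ⊇ T` and `T·Vʲ = T ⊔ Vʲ` is a group.
The left cosets of `Vʲ` in `I` are the fibres of reducing `(g₁₁, g₂₂, g₁₂, g₂₁)` modulo
`(𝔪^⌈j/2⌉, 𝔪^⌈j/2⌉, 𝔪^⌊j/2⌋, 𝔪^(⌊j/2⌋+1))`; on `I` this map hits exactly the tuples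
(unit, unit, anything, non-unit), so `[I : Vʲ] = u² q^(2⌊j/2⌋)` with
`u = |(R/𝔪^⌈j/2⌉)ˣ| = (q - 1) q^(⌈j/2⌉-1)`. An element of `T·Vʲ` is congruent modulo
`(rad 𝒥)ʲ` to the torus element with the same first row, so inside `T·Vʲ` the first row alone
separates cosets and `[T·Vʲ : Vʲ] = u q^⌊j/2⌋`. Dividing gives `(q - 1) q^(j-1)`.
-/
theorem Subgroup.relIndex_eq_natCard_image {G X : Type*} [Group G] {P K : Subgroup G}
    (f : G → X) (hf : ∀ a ∈ K, ∀ b ∈ K, f a = f b ↔ a⁻¹ * b ∈ P) :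
    P.relIndex K = Nat.card (f '' K) := by
  let f' : K → f '' K := fun k => ⟨f k, k, k.2, rfl⟩
  have hsurj : Function.Surjective f' := by
    rintro ⟨_, k, hk, rfl⟩
    exact ⟨⟨k, hk⟩, rfl⟩
  have hker : Setoid.ker f' = QuotientGroup.leftRel (P.subgroupOf K) := Setoid.ext fun a b => by
    rw [Setoid.ker_def, QuotientGroup.leftRel_apply, Subgroup.mem_subgroupOf, Subtype.ext_iff]
    exact hf a a.2 b b.2
  rw [Subgroup.relIndex, Subgroup.index,
    ← Nat.card_congr (Setoid.quotientKerEquivOfSurjective f' hsurj), hker]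
  rfl

section LocalRing

variable {R}

theorem IsLocalRing.isUnit_add_iff_of_mem_maximalIdeal {a b : R} (hb : b ∈ maximalIdeal R) :
    IsUnit (a + b) ↔ IsUnit a := by
  have h := add_mem_cancel_right (y := a) hb
  rwa [mem_maximalIdeal, mem_maximalIdeal, mem_nonunits_iff, mem_nonunits_iff, not_iff_not] at h

theorem IsLocalRing.isUnit_mk_pow_iff {k : ℕ} (hk : k ≠ 0) {x : R} :
    IsUnit (Ideal.Quotient.mk (maximalIdeal R ^ k) x) ↔ IsUnit x := by
  refine ⟨fun h => ?_, fun h => h.map _⟩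
  have := h.map (Ideal.Quotient.factor (Ideal.pow_le_self hk))
  rw [Ideal.Quotient.factor_mk] at this
  exact isUnit_of_map_unit (residue R) x this

theorem IsLocalRing.setOf_not_isUnit_quotient_pow (k : ℕ) :
    {x : R ⧸ maximalIdeal R ^ (k + 1) | ¬IsUnit x} =
      Submodule.map (maximalIdeal R ^ (k + 1)).mkQ (maximalIdeal R) := by
  ext x
  obtain ⟨x, rfl⟩ := Ideal.Quotient.mk_surjective x
  have h : maximalIdeal R = Submodule.comap (maximalIdeal R ^ (k + 1)).mkQ
      (Submodule.map (maximalIdeal R ^ (k + 1)).mkQ (maximalIdeal R)) := by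
    rw [Submodule.comap_map_mkQ, sup_eq_right.2 (Ideal.pow_le_self k.succ_ne_zero)]
  rw [Set.mem_ofPred_eq, isUnit_mk_pow_iff k.succ_ne_zero, ← mem_nonunits_iff,
    ← mem_maximalIdeal]
  exact SetLike.ext_iff.1 h x

theorem IsLocalRing.exists_isUnit_mk_eq {k : ℕ} (hk : k ≠ 0) {u : R ⧸ maximalIdeal R ^ k}
    (hu : IsUnit u) :
    ∃ x : R, IsUnit x ∧ Ideal.Quotient.mk _ x = u := by
  obtain ⟨x, rfl⟩ := Ideal.Quotient.mk_surjective u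
  exact ⟨x, (isUnit_mk_pow_iff hk).1 hu, rfl⟩

end LocalRing

section DiscreteValuationRing

variable {R : Type*} [CommRing R] [IsDomain R] [IsDiscreteValuationRing R]

theorem natCard_quotient_maximalIdeal_pow (k : ℕ) :
    Nat.card (R ⧸ maximalIdeal R ^ k) = Nat.card (ResidueField R) ^ k := by
  have h := cardQuot_pow_of_prime (P := maximalIdeal R) (IsDiscreteValuationRing.not_a_field R)
    (i := k)
  rwa [Submodule.cardQuot_apply, Submodule.cardQuot_apply] at h

variable [Finite (ResidueField R)]

theorem ncard_setOf_not_isUnit_quotient_pow (k : ℕ) :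
    {x : R ⧸ maximalIdeal R ^ (k + 1) | ¬IsUnit x}.ncard = Nat.card (ResidueField R) ^ k := by
  have h := Submodule.card_quotient_mul_card_quotient (maximalIdeal R) (maximalIdeal R ^ (k + 1))
    (Ideal.pow_le_self k.succ_ne_zero)
  rw [natCard_quotient_maximalIdeal_pow, pow_succ (Nat.card (ResidueField R))] at h
  rw [setOf_not_isUnit_quotient_pow]
  exact Nat.eq_of_mul_eq_mul_right (Nat.card_pos (α := ResidueField R)) h

theorem ncard_setOf_isUnit_quotient_pow (k : ℕ) :
    {x : R ⧸ maximalIdeal R ^ (k + 1) | IsUnit x}.ncard =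
      (Nat.card (ResidueField R) - 1) * Nat.card (ResidueField R) ^ k := by
  have : Finite (R ⧸ maximalIdeal R ^ (k + 1)) :=
    Nat.finite_of_card_ne_zero (by
      rw [natCard_quotient_maximalIdeal_pow]; exact (pow_pos Nat.card_pos _).ne')
  have h := Set.ncard_add_ncard_compl {x : R ⧸ maximalIdeal R ^ (k + 1) | IsUnit x}
  rw [Set.compl_ofPred, ncard_setOf_not_isUnit_quotient_pow, natCard_quotient_maximalIdeal_pow,
    pow_succ' (Nat.card (ResidueField R))] at h
  rw [Nat.sub_one_mul]
  omega

end DiscreteValuationRing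

section IwahoriOrder

variable {R}

/-- The power `(rad 𝒥)ʲ` of the radical of the Iwahori order `𝒥`: the `(r, s)` entry of its
elements lies in `𝔪 ^ ⌈(j + r - s) / 2⌉`. The order `𝒥` itself is the case `j = 0`. -/
def iwahoriRadicalPow (j : ℕ) : Submodule R (Matrix (Fin 2) (Fin 2) R) where
  carrier := {ξ | ∀ r s : Fin 2, ξ r s ∈ maximalIdeal R ^ ((j + 1 + r - s) / 2)}
  add_mem' hξ hη r s := add_mem (hξ r s) (hη r s)
  zero_mem' _ _ := zero_mem _
  smul_mem' c _ hξ r s := Ideal.mul_mem_left _ c (hξ r s)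

theorem mem_iwahoriRadicalPow_iff {j : ℕ} {ξ : Matrix (Fin 2) (Fin 2) R} :
    ξ ∈ iwahoriRadicalPow j ↔
      ξ 0 0 ∈ maximalIdeal R ^ ((j + 1) / 2) ∧ ξ 1 1 ∈ maximalIdeal R ^ ((j + 1) / 2) ∧
        ξ 0 1 ∈ maximalIdeal R ^ (j / 2) ∧ ξ 1 0 ∈ maximalIdeal R ^ (j / 2 + 1) := by
  have h10 : (j + 1 + 1) / 2 = j / 2 + 1 := by omega
  change (∀ r s : Fin 2, _) ↔ _
  simp only [Fin.forall_fin_two, Fin.val_zero, Fin.val_one, Nat.add_zero, Nat.sub_zero,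
    Nat.add_sub_cancel, h10]
  tauto

theorem iwahoriRadicalPow_antitone : Antitone (iwahoriRadicalPow (R := R)) :=
  fun _ _ hij _ hξ r s => Ideal.pow_le_pow_right (by omega) (hξ r s)

theorem mul_mem_iwahoriRadicalPow_add {a b : ℕ} {ξ η : Matrix (Fin 2) (Fin 2) R}
    (hξ : ξ ∈ iwahoriRadicalPow a) (hη : η ∈ iwahoriRadicalPow b) :
    ξ * η ∈ iwahoriRadicalPow (a + b) := fun r s => by
  rw [Matrix.mul_apply]
  refine Ideal.sum_mem _ fun t _ => Ideal.pow_le_pow_right ?_ (pow_add (maximalIdeal R) _ _ ▸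
    Ideal.mul_mem_mul (hξ r t) (hη t s))
  have := r.isLt; have := s.isLt; have := t.isLt
  omega

theorem isUnit_det_fin_two_iff_of_mem_maximalIdeal {A : Matrix (Fin 2) (Fin 2) R}
    (hA : A 1 0 ∈ maximalIdeal R) : IsUnit A.det ↔ IsUnit (A 0 0) ∧ IsUnit (A 1 1) := by
  rw [Matrix.det_fin_two, sub_eq_add_neg,
    isUnit_add_iff_of_mem_maximalIdeal (neg_mem (Ideal.mul_mem_left _ _ hA)), IsUnit.mul_iff]

theorem mem_iwahori_iff_mem_iwahoriRadicalPow_zero {g : GL (Fin 2) R} :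
    g ∈ iwahori R ↔ (g : Matrix (Fin 2) (Fin 2) R) ∈ iwahoriRadicalPow 0 := by
  simp [mem_iwahoriRadicalPow_iff, iwahori]

theorem mem_iwahoriFiltration_iff_sub_one_mem {j : ℕ} {g : GL (Fin 2) R} :
    g ∈ iwahoriFiltration R j ↔ (g : Matrix (Fin 2) (Fin 2) R) - 1 ∈ iwahoriRadicalPow j := by
  simp [mem_iwahoriRadicalPow_iff, iwahoriFiltration]

theorem iwahori_mul_mem_iwahoriRadicalPow {j : ℕ} {g : GL (Fin 2) R} (hg : g ∈ iwahori R)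
    {ξ : Matrix (Fin 2) (Fin 2) R} (hξ : ξ ∈ iwahoriRadicalPow j) :
    (g : Matrix (Fin 2) (Fin 2) R) * ξ ∈ iwahoriRadicalPow j := by
  simpa using mul_mem_iwahoriRadicalPow_add (mem_iwahori_iff_mem_iwahoriRadicalPow_zero.1 hg) hξ

theorem mul_iwahori_mem_iwahoriRadicalPow {j : ℕ} {g : GL (Fin 2) R} (hg : g ∈ iwahori R)
    {ξ : Matrix (Fin 2) (Fin 2) R} (hξ : ξ ∈ iwahoriRadicalPow j) :
    ξ * (g : Matrix (Fin 2) (Fin 2) R) ∈ iwahoriRadicalPow j := by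
  simpa using mul_mem_iwahoriRadicalPow_add hξ (mem_iwahori_iff_mem_iwahoriRadicalPow_zero.1 hg)

theorem iwahoriFiltration_subset_iwahori (j : ℕ) : iwahoriFiltration R j ⊆ iwahori R := by
  intro g hg
  rw [SetLike.mem_coe, mem_iwahori_iff_mem_iwahoriRadicalPow_zero,
    ← sub_add_cancel (g : Matrix (Fin 2) (Fin 2) R) 1]
  refine add_mem (iwahoriRadicalPow_antitone (Nat.zero_le j)
    (mem_iwahoriFiltration_iff_sub_one_mem.1 hg)) ?_
  simpa using mem_iwahori_iff_mem_iwahoriRadicalPow_zero.1 (one_mem (iwahori R))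

theorem inv_mul_mem_iwahoriFiltration_iff {j : ℕ} {a b : GL (Fin 2) R} (ha : a ∈ iwahori R) :
    a⁻¹ * b ∈ iwahoriFiltration R j ↔
      (b : Matrix (Fin 2) (Fin 2) R) - a ∈ iwahoriRadicalPow j := by
  have h : ((a⁻¹ * b : GL (Fin 2) R) : Matrix (Fin 2) (Fin 2) R) - 1 =
      (↑a⁻¹ : Matrix (Fin 2) (Fin 2) R) * (b - a) := by
    rw [mul_sub, ← Units.val_mul, ← Units.val_mul, inv_mul_cancel, Units.val_one]
  rw [mem_iwahoriFiltration_iff_sub_one_mem, h]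
  refine ⟨fun hb => ?_, iwahori_mul_mem_iwahoriRadicalPow (inv_mem ha)⟩
  simpa [← mul_assoc] using iwahori_mul_mem_iwahoriRadicalPow ha hb

end IwahoriOrder

section Filtration

variable {R}

variable (R) in
def iwahoriFiltrationSubgroup (j : ℕ) : Subgroup (GL (Fin 2) R) where
  carrier := iwahoriFiltration R j
  one_mem' := by simp [mem_iwahoriFiltration_iff_sub_one_mem]
  mul_mem' {x y} hx hy := by
    have hy' := iwahoriFiltration_subset_iwahori j hy
    rw [mem_iwahoriFiltration_iff_sub_one_mem] at hx hy ⊢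
    have h : ((x * y : GL (Fin 2) R) : Matrix (Fin 2) (Fin 2) R) - 1 =
        (x - 1) * y + (y - 1) := by
      rw [Units.val_mul]
      noncomm_ring
    rw [h]
    exact add_mem (mul_iwahori_mem_iwahoriRadicalPow hy' hx) hy
  inv_mem' {x} hx := by
    have hxI := iwahoriFiltration_subset_iwahori j hx
    rw [mem_iwahoriFiltration_iff_sub_one_mem] at hx
    simpa using (inv_mul_mem_iwahoriFiltration_iff hxI (b := 1)).2 (by simpa using neg_mem hx)

theorem conj_mem_iwahoriFiltration {j : ℕ} {g h : GL (Fin 2) R} (hg : g ∈ iwahori R)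
    (hh : h ∈ iwahoriFiltration R j) : g * h * g⁻¹ ∈ iwahoriFiltration R j := by
  rw [mem_iwahoriFiltration_iff_sub_one_mem] at hh ⊢
  have e : ((g * h * g⁻¹ : GL (Fin 2) R) : Matrix (Fin 2) (Fin 2) R) - 1 =
      g * (h - 1) * (↑g⁻¹ : Matrix (Fin 2) (Fin 2) R) := by
    rw [mul_sub, sub_mul, mul_one, ← Units.val_mul, ← Units.val_mul, ← Units.val_mul,
      mul_inv_cancel, Units.val_one]
  rw [e]
  exact mul_iwahori_mem_iwahoriRadicalPow (inv_mem hg) (iwahori_mul_mem_iwahoriRadicalPow hg hh)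

theorem iwahori_le_normalizer_iwahoriFiltration (j : ℕ) :
    iwahori R ≤ Subgroup.normalizer (iwahoriFiltration R j) := fun g hg h =>
  ⟨conj_mem_iwahoriFiltration hg, fun hh => by
    simpa [mul_assoc] using conj_mem_iwahoriFiltration (inv_mem hg) hh⟩

end Filtration

section RamifiedTorus

variable {R} {ϖ : R}

theorem mem_ramifiedTorus_iff (hϖ : ϖ ∈ maximalIdeal R) {g : GL (Fin 2) R} :
    g ∈ ramifiedTorus R ϖ ↔
      ∃ a b : R, (g : Matrix (Fin 2) (Fin 2) R) = !![a, b; ϖ * b, a] := by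
  refine ⟨fun ⟨a, b, h⟩ => ⟨a, b, h⟩, fun ⟨a, b, h⟩ => ?_⟩
  have hdet := (Matrix.isUnit_iff_isUnit_det _).1 g.isUnit
  rw [h, isUnit_det_fin_two_iff_of_mem_maximalIdeal
    (by simpa using Ideal.mul_mem_right b _ hϖ)] at hdet
  exact ⟨(by simpa using hdet.1 : IsUnit a).unit, b, h⟩

theorem ramifiedTorus_subset_iwahori (hϖ : ϖ ∈ maximalIdeal R) :
    ramifiedTorus R ϖ ⊆ iwahori R := fun g ⟨a, b, h⟩ => by
  simpa [iwahori, h] using Ideal.mul_mem_right b _ hϖ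

def ramifiedTorusSubgroup (hϖ : ϖ ∈ maximalIdeal R) : Subgroup (GL (Fin 2) R) where
  carrier := ramifiedTorus R ϖ
  one_mem' := (mem_ramifiedTorus_iff hϖ).2 ⟨1, 0, by simp [Matrix.one_fin_two]⟩
  mul_mem' {x y} hx hy := by
    obtain ⟨a, b, hx⟩ := (mem_ramifiedTorus_iff hϖ).1 hx
    obtain ⟨c, d, hy⟩ := (mem_ramifiedTorus_iff hϖ).1 hy
    refine (mem_ramifiedTorus_iff hϖ).2 ⟨a * c + ϖ * (b * d), a * d + b * c, ?_⟩
    rw [Units.val_mul, hx, hy]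
    ext r s
    fin_cases r <;> fin_cases s <;> simp [Matrix.mul_apply] <;> ring
  inv_mem' {x} hx := by
    obtain ⟨a, b, hx⟩ := (mem_ramifiedTorus_iff hϖ).1 hx
    let δ := Ring.inverse (a * a - b * (ϖ * b))
    refine (mem_ramifiedTorus_iff hϖ).2 ⟨δ * a, -(δ * b), ?_⟩
    rw [Matrix.coe_units_inv, Matrix.inv_def, hx, Matrix.det_fin_two_of,
      Matrix.adjugate_fin_two_of]
    ext r s
    fin_cases r <;> fin_cases s <;> simp <;> ring

end RamifiedTorus

section Invariants

variable {R} {ϖ : R}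

theorem coe_ramifiedTorusSubgroup_sup_iwahoriFiltrationSubgroup (hϖ : ϖ ∈ maximalIdeal R)
    (j : ℕ) : ((ramifiedTorusSubgroup hϖ ⊔ iwahoriFiltrationSubgroup R j : Subgroup _) :
      Set (GL (Fin 2) R)) = ramifiedTorus R ϖ * iwahoriFiltration R j :=
  Subgroup.coe_mul_of_left_le_normalizer_right _ _
    ((ramifiedTorus_subset_iwahori hϖ).trans (iwahori_le_normalizer_iwahoriFiltration j))

theorem ramifiedTorusSubgroup_sup_iwahoriFiltrationSubgroup_le_iwahori
    (hϖ : ϖ ∈ maximalIdeal R) (j : ℕ) :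
    ramifiedTorusSubgroup hϖ ⊔ iwahoriFiltrationSubgroup R j ≤ iwahori R :=
  sup_le (ramifiedTorus_subset_iwahori hϖ) (iwahoriFiltration_subset_iwahori j)

def iwahoriReduction (j : ℕ) (ξ : Matrix (Fin 2) (Fin 2) R) :
    (R ⧸ maximalIdeal R ^ ((j + 1) / 2)) × (R ⧸ maximalIdeal R ^ ((j + 1) / 2)) ×
      (R ⧸ maximalIdeal R ^ (j / 2)) × (R ⧸ maximalIdeal R ^ (j / 2 + 1)) :=
  (Ideal.Quotient.mk _ (ξ 0 0), Ideal.Quotient.mk _ (ξ 1 1), Ideal.Quotient.mk _ (ξ 0 1),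
    Ideal.Quotient.mk _ (ξ 1 0))

theorem iwahoriReduction_eq_iff {j : ℕ} {ξ η : Matrix (Fin 2) (Fin 2) R} :
    iwahoriReduction j ξ = iwahoriReduction j η ↔ ξ - η ∈ iwahoriRadicalPow j := by
  simp [iwahoriReduction, mem_iwahoriRadicalPow_iff, Ideal.Quotient.eq]

theorem image_iwahoriReduction_iwahori {j : ℕ} (hj : j ≠ 0) :
    (fun g : GL (Fin 2) R => iwahoriReduction j (g : Matrix (Fin 2) (Fin 2) R)) '' iwahori R =
      {x | IsUnit x} ×ˢ {x | IsUnit x} ×ˢ Set.univ ×ˢ {x | ¬IsUnit x} := by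
  refine Set.Subset.antisymm ?_ ?_
  · rintro _ ⟨g, hg, rfl⟩
    have hdet := (isUnit_det_fin_two_iff_of_mem_maximalIdeal hg).1
      ((Matrix.isUnit_iff_isUnit_det _).1 g.isUnit)
    refine ⟨hdet.1.map _, hdet.2.map _, trivial, ?_⟩
    exact (isUnit_mk_pow_iff (Nat.succ_ne_zero _)).not.2 hg
  · rintro ⟨u, w, b, c⟩ ⟨hu, hw, -, hc⟩
    obtain ⟨x, hx, rfl⟩ := exists_isUnit_mk_eq (by omega) hu
    obtain ⟨y, hy, rfl⟩ := exists_isUnit_mk_eq (by omega) hw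
    obtain ⟨b, rfl⟩ := Ideal.Quotient.mk_surjective b
    obtain ⟨c, rfl⟩ := Ideal.Quotient.mk_surjective c
    have hc : c ∈ maximalIdeal R := by simpa [isUnit_mk_pow_iff] using hc
    have hdet : IsUnit !![x, b; c, y].det :=
      (isUnit_det_fin_two_iff_of_mem_maximalIdeal (by simpa using hc)).2
        (by simpa using ⟨hx, hy⟩)
    exact ⟨Matrix.GeneralLinearGroup.mk'' _ hdet, by simpa [iwahori] using hc, rfl⟩

theorem torus_mem_iwahoriRadicalPow (hϖ : ϖ ∈ maximalIdeal R) {j : ℕ} {a b : R}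
    (ha : a ∈ maximalIdeal R ^ ((j + 1) / 2)) (hb : b ∈ maximalIdeal R ^ (j / 2)) :
    !![a, b; ϖ * b, a] ∈ iwahoriRadicalPow j := by
  have hϖb : ϖ * b ∈ maximalIdeal R ^ (j / 2 + 1) := by
    rw [pow_succ']
    exact Ideal.mul_mem_mul hϖ hb
  simp [mem_iwahoriRadicalPow_iff, ha, hb, hϖb]

theorem sub_torus_mem_iwahoriRadicalPow (hϖ : ϖ ∈ maximalIdeal R) {j : ℕ} {h : GL (Fin 2) R}
    (hh : h ∈ ramifiedTorus R ϖ * iwahoriFiltration R j) :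
    (h : Matrix (Fin 2) (Fin 2) R) - !![h 0 0, h 0 1; ϖ * h 0 1, h 0 0] ∈
      iwahoriRadicalPow j := by
  obtain ⟨t, ht, v, hv, rfl⟩ := hh
  set D := ((t * v : GL (Fin 2) R) : Matrix (Fin 2) (Fin 2) R) - t with hD_def
  have hD : D ∈ iwahoriRadicalPow j := by
    rw [hD_def, Units.val_mul, ← mul_sub_one]
    exact iwahori_mul_mem_iwahoriRadicalPow (ramifiedTorus_subset_iwahori hϖ ht)
      (mem_iwahoriFiltration_iff_sub_one_mem.1 hv)
  obtain ⟨a, b, htab⟩ := ht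
  have e : ((t * v : GL (Fin 2) R) : Matrix (Fin 2) (Fin 2) R) -
      !![(t * v : GL (Fin 2) R) 0 0, (t * v : GL (Fin 2) R) 0 1;
        ϖ * (t * v : GL (Fin 2) R) 0 1, (t * v : GL (Fin 2) R) 0 0] =
      D - !![D 0 0, D 0 1; ϖ * D 0 1, D 0 0] := by
    rw [hD_def, htab]
    ext r s
    fin_cases r <;> fin_cases s <;> simp
    ring
  have hD' := mem_iwahoriRadicalPow_iff.1 hD
  rw [e]
  exact sub_mem hD (torus_mem_iwahoriRadicalPow hϖ hD'.1 hD'.2.2.1)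

def firstRowReduction (j : ℕ) (ξ : Matrix (Fin 2) (Fin 2) R) :
    (R ⧸ maximalIdeal R ^ ((j + 1) / 2)) × (R ⧸ maximalIdeal R ^ (j / 2)) :=
  (Ideal.Quotient.mk _ (ξ 0 0), Ideal.Quotient.mk _ (ξ 0 1))

theorem firstRowReduction_eq_iff_sub_mem (hϖ : ϖ ∈ maximalIdeal R) {j : ℕ}
    {g h : GL (Fin 2) R} (hg : g ∈ ramifiedTorus R ϖ * iwahoriFiltration R j)
    (hh : h ∈ ramifiedTorus R ϖ * iwahoriFiltration R j) :
    firstRowReduction j (g : Matrix (Fin 2) (Fin 2) R) = firstRowReduction j h ↔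
      (g : Matrix (Fin 2) (Fin 2) R) - h ∈ iwahoriRadicalPow j := by
  simp only [firstRowReduction, Prod.mk.injEq, Ideal.Quotient.eq]
  refine ⟨fun ⟨h00, h01⟩ => ?_, fun hgh => ?_⟩
  · have e : (g : Matrix (Fin 2) (Fin 2) R) - h =
        (g - !![g 0 0, g 0 1; ϖ * g 0 1, g 0 0]) - (h - !![h 0 0, h 0 1; ϖ * h 0 1, h 0 0]) +
          !![g 0 0 - h 0 0, g 0 1 - h 0 1; ϖ * (g 0 1 - h 0 1), g 0 0 - h 0 0] := by
      ext r s
      fin_cases r <;> fin_cases s <;> simp <;> ring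
    rw [e]
    exact add_mem (sub_mem (sub_torus_mem_iwahoriRadicalPow hϖ hg)
      (sub_torus_mem_iwahoriRadicalPow hϖ hh)) (torus_mem_iwahoriRadicalPow hϖ h00 h01)
  · have hgh' := mem_iwahoriRadicalPow_iff.1 hgh
    exact ⟨hgh'.1, hgh'.2.2.1⟩

theorem image_firstRowReduction_ramifiedTorus_mul_iwahoriFiltration (hϖ : ϖ ∈ maximalIdeal R)
    {j : ℕ} (hj : j ≠ 0) :
    (fun g : GL (Fin 2) R => firstRowReduction j (g : Matrix (Fin 2) (Fin 2) R)) ''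
        (ramifiedTorus R ϖ * iwahoriFiltration R j) =
      {x | IsUnit x} ×ˢ Set.univ := by
  refine Set.Subset.antisymm ?_ ?_
  · rintro _ ⟨g, hg, rfl⟩
    have hgI : g ∈ iwahori R := by
      rw [← coe_ramifiedTorusSubgroup_sup_iwahoriFiltrationSubgroup hϖ j] at hg
      exact ramifiedTorusSubgroup_sup_iwahoriFiltrationSubgroup_le_iwahori hϖ j hg
    have hdet := (isUnit_det_fin_two_iff_of_mem_maximalIdeal hgI).1
      ((Matrix.isUnit_iff_isUnit_det _).1 g.isUnit)
    exact ⟨hdet.1.map _, trivial⟩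
  · rintro ⟨u, b⟩ ⟨hu, -⟩
    obtain ⟨x, hx, rfl⟩ := exists_isUnit_mk_eq (by omega) hu
    obtain ⟨b, rfl⟩ := Ideal.Quotient.mk_surjective b
    have hdet : IsUnit !![x, b; ϖ * b, x].det :=
      (isUnit_det_fin_two_iff_of_mem_maximalIdeal (by simpa using Ideal.mul_mem_right b _ hϖ)).2
        (by simpa using hx)
    exact ⟨Matrix.GeneralLinearGroup.mk'' _ hdet,
      ⟨_, ⟨hx.unit, b, rfl⟩, 1, (iwahoriFiltrationSubgroup R j).one_mem, mul_one _⟩, rfl⟩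

end Invariants

section Index

variable {R : Type*} [CommRing R] [IsDomain R] [IsDiscreteValuationRing R] {ϖ : R}

theorem relIndex_iwahoriFiltrationSubgroup_iwahori [Finite (ResidueField R)] {j : ℕ}
    (hj : j ≠ 0) :
    (iwahoriFiltrationSubgroup R j).relIndex (iwahori R) =
      {x : R ⧸ maximalIdeal R ^ ((j + 1) / 2) | IsUnit x}.ncard *
        ({x : R ⧸ maximalIdeal R ^ ((j + 1) / 2) | IsUnit x}.ncard *
          (Nat.card (ResidueField R) ^ (j / 2) * Nat.card (ResidueField R) ^ (j / 2))) := by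
  rw [Subgroup.relIndex_eq_natCard_image
      (fun g : GL (Fin 2) R => iwahoriReduction j (g : Matrix (Fin 2) (Fin 2) R)),
    Nat.card_coe_set_eq,
    image_iwahoriReduction_iwahori hj, Set.ncard_prod, Set.ncard_prod, Set.ncard_prod,
    Set.ncard_univ, natCard_quotient_maximalIdeal_pow, ncard_setOf_not_isUnit_quotient_pow]
  intro a ha b _
  rw [iwahoriReduction_eq_iff, ← neg_mem_iff, neg_sub]
  exact (inv_mul_mem_iwahoriFiltration_iff ha).symm

theorem relIndex_iwahoriFiltrationSubgroup_ramifiedTorusSubgroup_sup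
    (hϖ : ϖ ∈ maximalIdeal R) {j : ℕ} (hj : j ≠ 0) :
    (iwahoriFiltrationSubgroup R j).relIndex
        (ramifiedTorusSubgroup hϖ ⊔ iwahoriFiltrationSubgroup R j) =
      {x : R ⧸ maximalIdeal R ^ ((j + 1) / 2) | IsUnit x}.ncard *
        Nat.card (ResidueField R) ^ (j / 2) := by
  have hTV := coe_ramifiedTorusSubgroup_sup_iwahoriFiltrationSubgroup hϖ j
  rw [Subgroup.relIndex_eq_natCard_image
      (fun g : GL (Fin 2) R => firstRowReduction j (g : Matrix (Fin 2) (Fin 2) R)),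
    Nat.card_coe_set_eq, hTV, image_firstRowReduction_ramifiedTorus_mul_iwahoriFiltration hϖ hj,
    Set.ncard_prod, Set.ncard_univ, natCard_quotient_maximalIdeal_pow]
  intro a ha b hb
  have haI := ramifiedTorusSubgroup_sup_iwahoriFiltrationSubgroup_le_iwahori hϖ j ha
  rw [← SetLike.mem_coe, hTV] at ha hb
  rw [firstRowReduction_eq_iff_sub_mem hϖ ha hb, ← neg_mem_iff, neg_sub]
  exact (inv_mul_mem_iwahoriFiltration_iff haI).symm

theorem relIndex_ramifiedTorusSubgroup_sup_iwahori [Finite (ResidueField R)]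
    (hϖ : ϖ ∈ maximalIdeal R) {j : ℕ} (hj : j ≠ 0) :
    (ramifiedTorusSubgroup hϖ ⊔ iwahoriFiltrationSubgroup R j).relIndex (iwahori R) =
      (Nat.card (ResidueField R) - 1) * Nat.card (ResidueField R) ^ (j - 1) := by
  have h := Subgroup.relIndex_mul_relIndex _ _ _ le_sup_right
    (ramifiedTorusSubgroup_sup_iwahoriFiltrationSubgroup_le_iwahori hϖ j)
  rw [relIndex_iwahoriFiltrationSubgroup_ramifiedTorusSubgroup_sup hϖ hj,
    relIndex_iwahoriFiltrationSubgroup_iwahori hj] at h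
  obtain ⟨k, hk⟩ : ∃ k, (j + 1) / 2 = k + 1 := ⟨(j - 1) / 2, by omega⟩
  rw [hk, ncard_setOf_isUnit_quotient_pow] at h
  set q := Nat.card (ResidueField R)
  have hq : 1 < q := Finite.one_lt_card
  have hpos : 0 < (q - 1) * q ^ k * q ^ (j / 2) := by
    have : 0 < q - 1 := by omega
    positivity
  refine Nat.eq_of_mul_eq_mul_left hpos (h.trans ?_)
  rw [show j - 1 = k + j / 2 by omega]
  ring

end Index

theorem index_ramifiedTorus_mul_iwahoriFiltration_general (R : Type*) [CommRing R] [IsDomain R]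
    [IsDiscreteValuationRing R] [Finite (ResidueField R)]
    (q : ℕ) (hq : Nat.card (ResidueField R) = q)
    (ϖ : R) (hϖ : maximalIdeal R = Ideal.span {ϖ})
    (i : ℕ) (hi : 1 ≤ i) :
    ∃ H : Subgroup (GL (Fin 2) R),
      (H : Set (GL (Fin 2) R)) = ramifiedTorus R ϖ * iwahoriFiltration R i ∧
      H ≤ iwahori R ∧
      (H.subgroupOf (iwahori R)).index = (q - 1) * q ^ (i - 1) := by
  have hϖm : ϖ ∈ maximalIdeal R := hϖ ▸ Ideal.mem_span_singleton_self ϖ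
  refine ⟨ramifiedTorusSubgroup hϖm ⊔ iwahoriFiltrationSubgroup R i,
    coe_ramifiedTorusSubgroup_sup_iwahoriFiltrationSubgroup hϖm i,
    ramifiedTorusSubgroup_sup_iwahoriFiltrationSubgroup_le_iwahori hϖm i, ?_⟩
  rw [← hq]
  exact relIndex_ramifiedTorusSubgroup_sup_iwahori hϖm (by omega)

/-- Let `R` be a discrete valuation ring with maximal ideal `(ϖ)` and finite residue field
of odd cardinality `q`.  For every `i ≥ 1` the set `T·Vⁱ` is a subgroup of the Iwahori
subgroup `I`, of index `(q − 1)·q^(i−1)` in `I`. -/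
theorem index_ramifiedTorus_mul_iwahoriFiltration (R : Type*) [CommRing R] [IsDomain R]
    [IsDiscreteValuationRing R] [Finite (ResidueField R)]
    (q : ℕ) (hq : Nat.card (ResidueField R) = q) (hodd : Odd q)
    (ϖ : R) (hϖ : maximalIdeal R = Ideal.span {ϖ})
    (i : ℕ) (hi : 1 ≤ i) :
    ∃ H : Subgroup (GL (Fin 2) R),
      (H : Set (GL (Fin 2) R)) = ramifiedTorus R ϖ * iwahoriFiltration R i ∧
      H ≤ iwahori R ∧
      (H.subgroupOf (iwahori R)).index = (q - 1) * q ^ (i - 1) :=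
  index_ramifiedTorus_mul_iwahoriFiltration_general R q hq ϖ hϖ i hi
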